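/- arXiv:1906.11345 — 2 statements merged into one kernel-verified Lean document; each statement's English description precedes it below -/
import Mathlib

section
/- Suppose F : ℝ³ → ℝ is a C¹ function of (y₁, x₂, y₂) on a domain where y₁ > 0, satisfying the three equations (i) 2y₁ ∂F/∂y₁ − x₂ ∂F/∂x₂ − y₂ ∂F/∂y₂ − F = 0, (ii) −y₁² y₂ + (x₂ y₁ − F) ∂F/∂y₂ = 0 (after simplification using (i),(iii)), and (iii) ∂F/∂x₂ = y₁. Then there exists a real constant α such that (F − x₂ y₁)² + y₁² y₂² = α y₁ identically on the domain. -/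
/-!
The quantity `((F - x₂ y₁)² + y₁² y₂²) / y₁` has zero derivative on `S`: its `x₂`-derivative
vanishes by (iii), its `y₂`-derivative by (ii), and its `y₁`-derivative by (i) combined with (ii).
A function with zero derivative on a connected open set is constant.
-/

lemma ContinuousLinearMap.apply_eq_coords_sum (L : ℝ × ℝ × ℝ →L[ℝ] ℝ) (v : ℝ × ℝ × ℝ) :
    L v = v.1 * L (1, 0, 0) + v.2.1 * L (0, 1, 0) + v.2.2 * L (0, 0, 1) := by
  have hv : v = v.1 • ((1 : ℝ), (0 : ℝ), (0 : ℝ)) + v.2.1 • ((0 : ℝ), (1 : ℝ), (0 : ℝ))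
      + v.2.2 • ((0 : ℝ), (0 : ℝ), (1 : ℝ)) := by
    ext <;> simp
  conv_lhs => rw [hv]
  simp only [map_add, map_smul, smul_eq_mul]

noncomputable def firstIntegral (F : ℝ × ℝ × ℝ → ℝ) (q : ℝ × ℝ × ℝ) : ℝ :=
  ((F q - q.2.1 * q.1) ^ 2 + q.1 ^ 2 * q.2.2 ^ 2) * q.1⁻¹

theorem hasFDerivAt_firstIntegral_eq_zero {F : ℝ × ℝ × ℝ → ℝ} {L : ℝ × ℝ × ℝ →L[ℝ] ℝ}
    {p : ℝ × ℝ × ℝ} (hF : HasFDerivAt F L p) (hp : p.1 ≠ 0)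
    (h1 : 2 * p.1 * L (1, 0, 0) - p.2.1 * L (0, 1, 0) - p.2.2 * L (0, 0, 1) - F p = 0)
    (h2 : -(p.1 ^ 2 * p.2.2) + (p.2.1 * p.1 - F p) * L (0, 0, 1) = 0)
    (h3 : L (0, 1, 0) = p.1) :
    HasFDerivAt (firstIntegral F) (0 : ℝ × ℝ × ℝ →L[ℝ] ℝ) p := by
  have hy₁ : HasFDerivAt (fun q : ℝ × ℝ × ℝ => q.1) _ p := hasFDerivAt_fst (𝕜 := ℝ)
  have hx₂ : HasFDerivAt (fun q : ℝ × ℝ × ℝ => q.2.1) _ p :=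
    hasFDerivAt_fst.comp p (hasFDerivAt_snd (𝕜 := ℝ))
  have hy₂ : HasFDerivAt (fun q : ℝ × ℝ × ℝ => q.2.2) _ p :=
    hasFDerivAt_snd.comp p (hasFDerivAt_snd (𝕜 := ℝ))
  have hG := (((hF.sub (hx₂.mul hy₁)).pow 2).add ((hy₁.pow 2).mul (hy₂.pow 2))).mul
    ((hasFDerivAt_inv hp).comp p hy₁)
  refine hG.congr_fderiv (ContinuousLinearMap.ext fun v => ?_)
  simp only [Pi.sub_apply, Pi.mul_apply, Pi.add_apply, Function.comp_apply, Nat.add_one_sub_one,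
    pow_one, nsmul_eq_mul, Nat.cast_ofNat, smul_add, add_apply,
    smul_apply, sub_apply, ContinuousLinearMap.comp_apply,
    ContinuousLinearMap.coe_fst', ContinuousLinearMap.coe_snd',
    ContinuousLinearMap.toSpanSingleton_apply, zero_apply, smul_eq_mul, mul_neg,
    L.apply_eq_coords_sum v, h3]
  rw [h3] at h1
  field_simp
  linear_combination (F p - p.2.1 * p.1) * v.1 * h1 - (2 * v.2.2 * p.1 + v.1 * p.2.2) * h2

/-- if a C¹ function F(y₁,x₂,y₂) on a connected open set where y₁ > 0
satisfies (i) 2y₁ F_{y₁} − x₂ F_{x₂} − y₂ F_{y₂} − F = 0, (ii) −y₁²y₂ + (x₂y₁−F) F_{y₂} = 0,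
(iii) F_{x₂} = y₁, then (F − x₂y₁)² + y₁²y₂² = α y₁ for some real constant α. -/
theorem stmt4 (S : Set (ℝ × ℝ × ℝ)) (hopen : IsOpen S) (hconn : IsConnected S)
    (hpos : ∀ p ∈ S, 0 < p.1)
    (F : ℝ × ℝ × ℝ → ℝ) (hF : ContDiffOn ℝ 1 F S)
    (h1 : ∀ p ∈ S, 2 * p.1 * fderiv ℝ F p (1, 0, 0) - p.2.1 * fderiv ℝ F p (0, 1, 0)
        - p.2.2 * fderiv ℝ F p (0, 0, 1) - F p = 0)
    (h2 : ∀ p ∈ S, -(p.1^2 * p.2.2) + (p.2.1 * p.1 - F p) * fderiv ℝ F p (0, 0, 1) = 0)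
    (h3 : ∀ p ∈ S, fderiv ℝ F p (0, 1, 0) = p.1) :
    ∃ α : ℝ, ∀ p ∈ S, (F p - p.2.1 * p.1)^2 + p.1^2 * p.2.2^2 = α * p.1 := by
  have hderiv : ∀ p ∈ S, HasFDerivAt (firstIntegral F) (0 : ℝ × ℝ × ℝ →L[ℝ] ℝ) p :=
    fun p hp => hasFDerivAt_firstIntegral_eq_zero
      ((hF.differentiableOn one_ne_zero p hp).differentiableAt (hopen.mem_nhds hp)).hasFDerivAt
      (hpos p hp).ne' (h1 p hp) (h2 p hp) (h3 p hp)
  obtain ⟨α, hα⟩ := hopen.exists_is_const_of_fderiv_eq_zero hconn.isPreconnected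
    (fun p hp => (hderiv p hp).differentiableAt.differentiableWithinAt)
    (fun p hp => (hderiv p hp).fderiv)
  refine ⟨α, fun p hp => ?_⟩
  rw [← hα p hp, firstIntegral, inv_mul_cancel_right₀ (hpos p hp).ne']
end

section
/- Let X₁ = z₁² ∂/∂z₁ + C z₃ ∂/∂z₂ − 2B z₁ z₃ ∂/∂z₃, X₂ = −z₁ ∂/∂z₁ + B z₃ ∂/∂z₃, X₃ = ∂/∂z₁, X₄ = ∂/∂z₂, X₅ = z₂ ∂/∂z₂ + z₃ ∂/∂z₃ be holomorphic vector fields on ℂ³, where B, C are complex constants. Then the relations [X₁,X₂] = X₁, [X₁,X₃] = 2X₂, [X₂,X₃] = X₃, [X₄,X₅] = X₄, and [X₁,X₄] = [X₁,X₅] = [X₂,X₄] = [X₂,X₅] = [X₃,X₄] = [X₃,X₅] = 0 all hold if and only if C(B+1) = 0. -/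
open Complex

abbrev VF := (Fin 3 → ℂ) → (Fin 3 → ℂ)

noncomputable def vbracket (X Y : VF) : VF :=
  fun z j => ∑ k, (X z k * fderiv ℂ (fun w => Y w j) z (Pi.single k 1)
      - Y z k * fderiv ℂ (fun w => X w j) z (Pi.single k 1))

/-!
Every relation except `[X₁, X₂] = X₁` holds for all `B, C`. The `∂₂`-component of `[X₁, X₂]` is
`-BC z₃` while that of `X₁` is `C z₃`, and the other components agree; so `[X₁, X₂] = X₁` is
exactly `C (B + 1) = 0`.
-/

theorem ContinuousLinearMap.sum_mul_apply_single {ι : Type*} [Fintype ι] [DecidableEq ι]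
    {𝕜 : Type*} [Semiring 𝕜] [TopologicalSpace 𝕜] (L : (ι → 𝕜) →L[𝕜] 𝕜) (v : ι → 𝕜) :
    ∑ k, v k * L (Pi.single k 1) = L v := by
  conv_rhs => rw [← Finset.univ_sum_single v]
  simp only [map_sum]
  refine Finset.sum_congr rfl fun k _ => ?_
  rw [← smul_eq_mul, ← map_smul, ← Pi.single_smul', smul_eq_mul, mul_one]

theorem vbracket_apply (X Y : VF) (z : Fin 3 → ℂ) (j : Fin 3) :
    vbracket X Y z j =
      fderiv ℂ (fun w => Y w j) z (X z) - fderiv ℂ (fun w => X w j) z (Y z) := by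
  simp only [vbracket, Finset.sum_sub_distrib, ContinuousLinearMap.sum_mul_apply_single]

namespace M16

def X₁ (B C : ℂ) : VF := fun z => ![(z 0)^2, C * z 2, -2 * B * z 0 * z 2]

def X₂ (B : ℂ) : VF := fun z => ![-(z 0), 0, B * z 2]

def X₃ : VF := fun _ => ![1, 0, 0]

def X₄ : VF := fun _ => ![0, 1, 0]

def X₅ : VF := fun z => ![0, z 1, z 2]

variable (B C : ℂ)

theorem vbracket_X₁_X₂ :
    vbracket (X₁ B C) (X₂ B) = fun z => ![(z 0)^2, -(B * C) * z 2, -2 * B * z 0 * z 2] := by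
  funext z j
  fin_cases j <;>
  · simp (disch := fun_prop) [vbracket_apply, X₁, X₂, fderiv_fun_mul,
      fderiv_fun_pow, fderiv_fun_neg, fderiv_apply]
    ring

theorem vbracket_X₁_X₂_eq_iff : vbracket (X₁ B C) (X₂ B) = X₁ B C ↔ C * (B + 1) = 0 := by
  rw [vbracket_X₁_X₂]
  constructor
  · intro h
    have h₁ := congrFun (congrFun h ![0, 0, 1]) 1
    simp only [X₁, Matrix.cons_val] at h₁
    linear_combination -h₁
  · intro h
    rw [show -(B * C) = C by linear_combination -h]
    rfl

theorem vbracket_X₁_X₃ : vbracket (X₁ B C) X₃ = fun z => (2:ℂ) • X₂ B z := by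
  funext z j
  fin_cases j <;>
    simp (disch := fun_prop) [vbracket_apply, X₁, X₂, X₃, fderiv_fun_mul, fderiv_fun_pow,
      fderiv_fun_neg, fderiv_apply]
  ring

theorem vbracket_X₂_X₃ : vbracket (X₂ B) X₃ = X₃ := by
  funext z j
  fin_cases j <;>
    simp (disch := fun_prop) [vbracket_apply, X₂, X₃, fderiv_fun_mul, fderiv_fun_neg, fderiv_apply]

theorem vbracket_X₄_X₅ : vbracket X₄ X₅ = X₄ := by
  funext z j
  fin_cases j <;>
    simp (disch := fun_prop) [vbracket_apply, X₄, X₅, fderiv_apply]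

theorem vbracket_X₁_X₄ : vbracket (X₁ B C) X₄ = 0 := by
  funext z j
  fin_cases j <;>
    simp (disch := fun_prop) [vbracket_apply, X₁, X₄, fderiv_fun_mul, fderiv_fun_pow,
      fderiv_fun_neg, fderiv_apply]

theorem vbracket_X₁_X₅ : vbracket (X₁ B C) X₅ = 0 := by
  funext z j
  fin_cases j <;>
    simp (disch := fun_prop) [vbracket_apply, X₁, X₅, fderiv_fun_mul, fderiv_fun_pow,
      fderiv_fun_neg, fderiv_apply]

theorem vbracket_X₂_X₄ : vbracket (X₂ B) X₄ = 0 := by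
  funext z j
  fin_cases j <;>
    simp (disch := fun_prop) [vbracket_apply, X₂, X₄, fderiv_fun_mul, fderiv_fun_neg, fderiv_apply]

theorem vbracket_X₂_X₅ : vbracket (X₂ B) X₅ = 0 := by
  funext z j
  fin_cases j <;>
    simp (disch := fun_prop) [vbracket_apply, X₂, X₅, fderiv_fun_mul, fderiv_fun_neg, fderiv_apply]

theorem vbracket_X₃_X₄ : vbracket X₃ X₄ = 0 := by
  funext z j
  fin_cases j <;>
    simp (disch := fun_prop) [vbracket_apply, X₃, X₄, fderiv_apply]

theorem vbracket_X₃_X₅ : vbracket X₃ X₅ = 0 := by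
  funext z j
  fin_cases j <;>
    simp (disch := fun_prop) [vbracket_apply, X₃, X₅, fderiv_apply]

end M16

/-- the fields X₁ = z₁²∂₁ + Cz₃∂₂ − 2Bz₁z₃∂₃, X₂ = −z₁∂₁ + Bz₃∂₃, X₃ = ∂₁,
X₄ = ∂₂, X₅ = z₂∂₂ + z₃∂₃ satisfy the su(1,1)⊕g₂ relations [X₁,X₂]=X₁, [X₁,X₃]=2X₂,
[X₂,X₃]=X₃, [X₄,X₅]=X₄ with all remaining brackets zero, iff C(B+1) = 0. -/
theorem stmt9 (B C : ℂ) :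
    let X1 : VF := fun z => ![(z 0)^2, C * z 2, -2 * B * z 0 * z 2]
    let X2 : VF := fun z => ![-(z 0), 0, B * z 2]
    let X3 : VF := fun _ => ![1, 0, 0]
    let X4 : VF := fun _ => ![0, 1, 0]
    let X5 : VF := fun z => ![0, z 1, z 2]
    (vbracket X1 X2 = X1 ∧
     vbracket X1 X3 = (fun z => (2:ℂ) • X2 z) ∧
     vbracket X2 X3 = X3 ∧
     vbracket X4 X5 = X4 ∧
     vbracket X1 X4 = 0 ∧
     vbracket X1 X5 = 0 ∧
     vbracket X2 X4 = 0 ∧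
     vbracket X2 X5 = 0 ∧
     vbracket X3 X4 = 0 ∧
     vbracket X3 X5 = 0) ↔ C * (B + 1) = 0 := by
  intro X1 X2 X3 X4 X5
  rw [show X1 = M16.X₁ B C from rfl, show X2 = M16.X₂ B from rfl, show X3 = M16.X₃ from rfl,
    show X4 = M16.X₄ from rfl, show X5 = M16.X₅ from rfl]
  simp only [M16.vbracket_X₁_X₂_eq_iff, M16.vbracket_X₁_X₃, M16.vbracket_X₂_X₃, M16.vbracket_X₄_X₅,
    M16.vbracket_X₁_X₄, M16.vbracket_X₁_X₅, M16.vbracket_X₂_X₄, M16.vbracket_X₂_X₅,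
    M16.vbracket_X₃_X₄, M16.vbracket_X₃_X₅, and_true]
end
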